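/- Let T : Λ → Λ be an ergodic measure-preserving transformation of a probability space (Λ, μ), v ∈ L^∞(Λ), and suppose b ≡ 1. Assume a_ε satisfies the regularity conditions and the moment condition (5.2) holds with exponent q ≥ 1. Then there is a constant C > 0 such that for all ε ∈ (0,1), x̂_ε(t) = ξ + ∫₀^t ā(x̂_ε(s)) ds + W_ε(t) + D_ε(t) + E_ε(t) for all t ∈ [0,1], where the remainder E_ε defined by this identity satisfies ‖sup_{t∈[0,1]} |E_ε(t)|‖_{L^q(μ)} ≤ C ε^{1/3}. -/

import Mathlib

open MeasureTheory ProbabilityTheory Filter Topology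

noncomputable section

/-- The space `C[0,1]` of continuous functions on `[0,1]` with the sup norm. -/
abbrev C01 := C(Set.Icc (0:ℝ) 1, ℝ)

/-- The Prokhorov distance between (the laws of) two random elements of `C[0,1]`,
defined on possibly different probability spaces:
`π₁(X,Y) = inf{ε > 0 : P(X ∈ A) ≤ Q(Y ∈ Aᵉ) + ε for all closed A}`. -/
def prokhorov {Ω₁ Ω₂ : Type*} [MeasurableSpace Ω₁] [MeasurableSpace Ω₂]
    (P : Measure Ω₁) (Q : Measure Ω₂) (X : Ω₁ → C01) (Y : Ω₂ → C01) : ℝ :=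
  sInf {ε : ℝ | 0 < ε ∧ ∀ A : Set C01, IsClosed A →
    P (X ⁻¹' A) ≤ Q (Y ⁻¹' Metric.thickening ε A) + ENNReal.ofReal ε}

/-- Birkhoff sums `v_n = ∑_{j<n} v ∘ T^j`. -/
def birkhoff {Λ : Type*} (T : Λ → Λ) (v : Λ → ℝ) (n : ℕ) (x : Λ) : ℝ :=
  ∑ j ∈ Finset.range n, v (T^[j] x)

/-- Evaluation of `u ∈ C[0,1]` at an arbitrary real time (clamped to `[0,1]`). -/
def ev (u : C01) (s : ℝ) : ℝ := u (Set.projIcc (0:ℝ) 1 (by norm_num) s)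

/-- The slow variables of the fast-slow system
`x_ε(n+1) = x_ε(n) + ε² a_ε(x_ε(n), y(n)) + ε b(x_ε(n)) v(y(n))`, `x_ε(0) = ξ`,
where `y(n) = Tⁿ y`. -/
def slow {Λ : Type*} (a : ℝ → ℝ → Λ → ℝ) (b : ℝ → ℝ) (v : Λ → ℝ) (T : Λ → Λ)
    (ξ ε : ℝ) (y : Λ) : ℕ → ℝ
  | 0 => ξ
  | n+1 => slow a b v T ξ ε y n + ε^2 * a ε (slow a b v T ξ ε y n) (T^[n] y)
      + ε * b (slow a b v T ξ ε y n) * v (T^[n] y)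

/-- `ā(x) = ∫ a₀(x,y) dμ(y)`. -/
def abar {Λ : Type*} [MeasurableSpace Λ] (μ : Measure Λ) (a : ℝ → ℝ → Λ → ℝ) (x : ℝ) : ℝ :=
  ∫ y, a 0 x y ∂μ

/-- `ã(x,y) = a₀(x,y) − ā(x)`. -/
def atil {Λ : Type*} [MeasurableSpace Λ] (μ : Measure Λ) (a : ℝ → ℝ → Λ → ℝ)
    (x : ℝ) (y : Λ) : ℝ :=
  a 0 x y - abar μ a x

/-- `J_ε(n) = ε^{4/3} ∑_{j=nM}^{(n+1)M−1} ã(x_ε(nM), Tʲy)` with `M = ⌊ε^{-4/3}⌋`. -/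
def Jeps {Λ : Type*} [MeasurableSpace Λ] (μ : Measure Λ) (a : ℝ → ℝ → Λ → ℝ)
    (b : ℝ → ℝ) (v : Λ → ℝ) (T : Λ → Λ) (ξ ε : ℝ) (y : Λ) (n : ℕ) : ℝ :=
  ε ^ ((4:ℝ)/3) * ∑ j ∈ Finset.Ico (n * ⌊ε ^ (-((4:ℝ)/3))⌋₊) ((n+1) * ⌊ε ^ (-((4:ℝ)/3))⌋₊),
    atil μ a (slow a b v T ξ ε y (n * ⌊ε ^ (-((4:ℝ)/3))⌋₊)) (T^[j] y)

/-- `D_ε(t) = ε^{2/3} ∑_{n<⌊t ε^{-2/3}⌋} J_ε(n)`. -/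
def Deps {Λ : Type*} [MeasurableSpace Λ] (μ : Measure Λ) (a : ℝ → ℝ → Λ → ℝ)
    (b : ℝ → ℝ) (v : Λ → ℝ) (T : Λ → Λ) (ξ ε : ℝ) (y : Λ) (t : ℝ) : ℝ :=
  ε ^ ((2:ℝ)/3) * ∑ n ∈ Finset.range ⌊t * ε ^ (-((2:ℝ)/3))⌋₊, Jeps μ a b v T ξ ε y n

/-!
Write `x_j = x_ε(j)`, `y_j = T^j y` and `N = ⌊t ε⁻²⌋`. Up to the interpolation term,
`x̂_ε(t) - ξ - W_ε(t) = ε² ∑_{j<N} a_ε(x_j, y_j)`, and `a_ε = (a_ε - a₀) + ā + ã`.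
The `a_ε - a₀` part is `O(ε^{1/3})` by (ii). The `ā` part is a Riemann sum for
`∫₀ᵗ ā(x̂_ε)`, accurate to `O(ε)` because `x̂_ε` moves by `O(ε)` per step and `ā` is
Lipschitz. The `ã` part differs from `D_ε` only in that `D_ε` freezes the slow variable at
the start of each block of `M ≈ ε^{-4/3}` steps; inside a block `x_ε` drifts by at most
`ε² M |a|_∞ + ε |v_r ∘ T^{nM}|`, so freezing costs `O(ε^{1/3})` plus `2Lε³` times the
block oscillation `∑_{n < ε^{-2/3}} ∑_{r<M} |v_r ∘ T^{nM}|`. Since `T` preserves `μ`, the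
moment bound (5.2) gives this sum an `L^q` norm `O(ε^{-2/3} · M · M^{1/2}) = O(ε^{-8/3})`.
-/

open Finset
open scoped ENNReal

lemma abs_sum_le_card_mul {ι : Type*} (s : Finset ι) {f : ι → ℝ} {B : ℝ}
    (h : ∀ i ∈ s, |f i| ≤ B) : |∑ i ∈ s, f i| ≤ #s * B :=
  (abs_sum_le_sum_abs f s).trans (by simpa using sum_le_card_nsmul s _ B h)

lemma abs_mul_sum_range_le {f : ℕ → ℝ} {h B : ℝ} {N : ℕ} (hh : 0 ≤ h) (hN : N * h ≤ 1)
    (hB : ∀ j, |f j| ≤ B) : |h * ∑ j ∈ range N, f j| ≤ B := by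
  have hB0 : 0 ≤ B := (abs_nonneg _).trans (hB 0)
  rw [abs_mul, abs_of_nonneg hh]
  calc _ ≤ h * (N * B) := by gcongr; simpa using abs_sum_le_card_mul (range N) fun j _ => hB j
    _ = (N * h) * B := by ring
    _ ≤ B := mul_le_of_le_one_left hB0 hN

lemma natFloor_mul_natFloor_le {a b : ℝ} (ha : 0 ≤ a) (hb : 0 ≤ b) :
    ⌊a⌋₊ * ⌊b⌋₊ ≤ ⌊a * b⌋₊ :=
  Nat.le_floor <| by
    push_cast; exact mul_le_mul (Nat.floor_le ha) (Nat.floor_le hb) (by positivity) ha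

lemma natFloor_mul_sub_natFloor_mul_natFloor_le {a b : ℝ} (ha : 0 ≤ a) (hb : 0 ≤ b) :
    (⌊a * b⌋₊ : ℝ) - ⌊a⌋₊ * ⌊b⌋₊ ≤ a + b := by
  nlinarith [Nat.floor_le (mul_nonneg ha hb), Nat.lt_floor_add_one a, Nat.lt_floor_add_one b,
    Nat.floor_le ha, (Nat.cast_nonneg ⌊a⌋₊ : (0 : ℝ) ≤ ⌊a⌋₊)]

lemma rpow_natCast_div_three {ε : ℝ} (hε : 0 ≤ ε) (k : ℕ) :
    ε ^ ((k : ℝ) / 3) = (ε ^ ((1:ℝ)/3)) ^ k := by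
  rw [← Real.rpow_natCast, ← Real.rpow_mul hε]; ring_nf

lemma le_rpow_one_div_three {ε : ℝ} (hε0 : 0 < ε) (hε1 : ε ≤ 1) : ε ≤ ε ^ ((1:ℝ)/3) := by
  simpa using Real.rpow_le_rpow_of_exponent_ge hε0 hε1 (by norm_num : (1:ℝ)/3 ≤ 1)

lemma rpow_neg_natCast_div_three {ε : ℝ} (hε : 0 ≤ ε) (k : ℕ) :
    ε ^ (-((k : ℝ) / 3)) = ((ε ^ ((1:ℝ)/3)) ^ k)⁻¹ := by
  rw [Real.rpow_neg hε, rpow_natCast_div_three hε]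

lemma pow_twelve_mul_natFloor_mul_sq_le {u t : ℝ} (hu0 : 0 < u) (hu1 : u ≤ 1)
    (ht : t ∈ Set.Icc 0 1) :
    u ^ 12 * (⌊t * (u ^ 2)⁻¹⌋₊ * (⌊(u ^ 4)⁻¹⌋₊ : ℝ) ^ 2) ≤ u := by
  have hK : (⌊t * (u ^ 2)⁻¹⌋₊ : ℝ) ≤ (u ^ 2)⁻¹ :=
    (Nat.floor_le (by have := ht.1; positivity)).trans (mul_le_of_le_one_left (by positivity) ht.2)
  calc _ ≤ u ^ 12 * ((u ^ 2)⁻¹ * ((u ^ 4)⁻¹) ^ 2) := by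
        gcongr; exact Nat.floor_le (by positivity)
    _ = u ^ 2 := by field_simp
    _ ≤ u := by nlinarith

lemma pow_six_mul_natFloor_sub_le {u t : ℝ} (hu0 : 0 < u) (hu1 : u ≤ 1)
    (ht : t ∈ Set.Icc 0 1) :
    u ^ 6 * ((⌊t * (u ^ 2)⁻¹ * (u ^ 4)⁻¹⌋₊ : ℝ) - ⌊t * (u ^ 2)⁻¹⌋₊ * ⌊(u ^ 4)⁻¹⌋₊) ≤ 2 * u := by
  have hα0 : 0 ≤ t * (u ^ 2)⁻¹ := by have := ht.1; positivity
  have hα : t * (u ^ 2)⁻¹ ≤ (u ^ 2)⁻¹ := mul_le_of_le_one_left (by positivity) ht.2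
  calc _ ≤ u ^ 6 * ((u ^ 2)⁻¹ + (u ^ 4)⁻¹) := by
        gcongr
        exact (natFloor_mul_sub_natFloor_mul_natFloor_le hα0 (by positivity)).trans (by gcongr)
    _ = u ^ 4 + u ^ 2 := by field_simp
    _ ≤ 2 * u := by
      have hu2 : u ^ 2 ≤ u := by nlinarith
      nlinarith

lemma pow_three_mul_blockCount_le {ε : ℝ} (hε : ε ∈ Set.Ioo 0 1) :
    ε ^ 3 * (⌊ε ^ (-((2:ℝ)/3))⌋₊ * ⌊ε ^ (-((4:ℝ)/3))⌋₊
      * (⌊ε ^ (-((4:ℝ)/3))⌋₊ : ℝ) ^ ((1:ℝ)/2)) ≤ ε ^ ((1:ℝ)/3) := by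
  obtain ⟨hε0, hε1⟩ := hε
  set u := ε ^ ((1:ℝ)/3)
  have hu0 : 0 < u := Real.rpow_pos_of_pos hε0 _
  have hε3 : ε = u ^ 3 := by rw [← rpow_natCast_div_three hε0.le 3]; norm_num
  have hα : ε ^ (-((2:ℝ)/3)) = (u ^ 2)⁻¹ := by exact_mod_cast rpow_neg_natCast_div_three hε0.le 2
  have hβ : ε ^ (-((4:ℝ)/3)) = (u ^ 4)⁻¹ := by exact_mod_cast rpow_neg_natCast_div_three hε0.le 4
  rw [hα, hβ, ← Real.sqrt_eq_rpow]
  have hK : (⌊(u ^ 2)⁻¹⌋₊ : ℝ) ≤ (u ^ 2)⁻¹ := Nat.floor_le (by positivity)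
  have hM : (⌊(u ^ 4)⁻¹⌋₊ : ℝ) ≤ (u ^ 4)⁻¹ := Nat.floor_le (by positivity)
  have hsqrt : √(⌊(u ^ 4)⁻¹⌋₊ : ℝ) ≤ (u ^ 2)⁻¹ := by
    rw [← Real.sqrt_sq (by positivity : 0 ≤ (u ^ 2)⁻¹)]
    exact Real.sqrt_le_sqrt (hM.trans_eq (by ring))
  calc _ ≤ u ^ 9 * ((u ^ 2)⁻¹ * (u ^ 4)⁻¹ * (u ^ 2)⁻¹) := by rw [hε3, ← pow_mul]; gcongr
    _ = u := by field_simp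

lemma sum_range_mul_eq_sum_blocks {β : Type*} [AddCommMonoid β] (f : ℕ → β) (K M : ℕ) :
    ∑ j ∈ range (K * M), f j = ∑ n ∈ range K, ∑ j ∈ Ico (n * M) ((n + 1) * M), f j := by
  induction K with
  | zero => simp
  | succ K ih =>
    rw [sum_range_succ, ← ih, Nat.succ_mul, sum_range_add_sum_Ico _ (Nat.le_add_right _ _)]

lemma abs_sum_diag_sub_sum_blocks_le (F : ℕ → ℕ → ℝ) {K M N : ℕ} (hKMN : K * M ≤ N) {B : ℝ}
    (hB : ∀ j, |F j j| ≤ B) :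
    |∑ j ∈ range N, F j j - ∑ n ∈ range K, ∑ j ∈ Ico (n * M) ((n + 1) * M), F (n * M) j|
      ≤ ∑ n ∈ range K, ∑ r ∈ range M, |F (n * M + r) (n * M + r) - F (n * M) (n * M + r)|
        + (N - K * M) * B := by
  have hblocks : |∑ n ∈ range K, ∑ j ∈ Ico (n * M) ((n + 1) * M), (F j j - F (n * M) j)|
      ≤ ∑ n ∈ range K, ∑ r ∈ range M, |F (n * M + r) (n * M + r) - F (n * M) (n * M + r)| := by
    refine (abs_sum_le_sum_abs _ _).trans (sum_le_sum fun n _ => ?_)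
    rw [sum_Ico_eq_sum_range, Nat.succ_mul, Nat.add_sub_cancel_left]
    exact abs_sum_le_sum_abs _ _
  have htail : |∑ j ∈ Ico (K * M) N, F j j| ≤ (N - K * M) * B := by
    simpa [Nat.cast_sub hKMN] using abs_sum_le_card_mul _ fun j (_ : j ∈ Ico (K * M) N) => hB j
  rw [← sum_range_add_sum_Ico _ hKMN, sum_range_mul_eq_sum_blocks, add_sub_right_comm]
  simp only [← sum_sub_distrib]
  exact (abs_add_le _ _).trans (add_le_add hblocks htail)

def lineInterp (x : ℕ → ℝ) (s : ℝ) : ℝ :=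
  x ⌊s⌋₊ + (s - ⌊s⌋₊) * (x (⌊s⌋₊ + 1) - x ⌊s⌋₊)

lemma abs_lineInterp_sub_le (x : ℕ → ℝ) {n : ℕ} {s : ℝ} (hs : s ∈ Set.Icc (n : ℝ) (n + 1)) :
    |lineInterp x s - x n| ≤ |x (n + 1) - x n| := by
  rcases hs.2.lt_or_eq with hlt | rfl
  · have hfloor : ⌊s⌋₊ = n := (Nat.floor_eq_iff (n.cast_nonneg.trans hs.1)).2 ⟨hs.1, hlt⟩
    rw [lineInterp, hfloor, add_sub_cancel_left, abs_mul, abs_of_nonneg (sub_nonneg.2 hs.1)]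
    exact mul_le_of_le_one_left (abs_nonneg _) (by linarith)
  · have hfloor : ⌊(n : ℝ) + 1⌋₊ = n + 1 := by exact_mod_cast Nat.floor_natCast (n + 1)
    simp [lineInterp, hfloor]

lemma abs_integral_sub_riemannSum_le {f : ℝ → ℝ} (hf : Continuous f) {c : ℕ → ℝ}
    {h t D B : ℝ} {N : ℕ} (hh : 0 < h) (hNt : N * h ≤ t) (htN : t ≤ (N + 1) * h)
    (hD : ∀ n < N, ∀ s ∈ Set.Icc (n * h) ((n + 1) * h), |f s - c n| ≤ D)
    (hB : ∀ s, |f s| ≤ B) :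
    |(∫ s in (0:ℝ)..t, f s) - h * ∑ n ∈ range N, c n| ≤ N * h * D + h * B := by
  have hint : ∀ p q, IntervalIntegrable f volume p q := fun p q => hf.intervalIntegrable p q
  have hsplit : (∫ s in (0:ℝ)..t, f s)
      = ∑ n ∈ range N, (∫ s in (n * h)..((n + 1) * h), f s) + ∫ s in (N * h)..t, f s := by
    have hsum := intervalIntegral.sum_integral_adjacent_intervals
      (a := fun n : ℕ => (n : ℝ) * h) (n := N) (μ := volume) fun n _ => hint _ _
    simp only [Nat.cast_zero, zero_mul, Nat.cast_succ] at hsum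
    rw [hsum, intervalIntegral.integral_add_adjacent_intervals (hint _ _) (hint _ _)]
  have hblock : ∀ n < N, |(∫ s in (n * h)..((n + 1) * h), f s) - h * c n| ≤ h * D := by
    intro n hn
    have hle : (n : ℝ) * h ≤ (n + 1) * h := by nlinarith
    rw [show h * c n = ∫ _ in (n * h)..((n + 1) * h), c n by
        rw [intervalIntegral.integral_const, smul_eq_mul]; ring,
      ← intervalIntegral.integral_sub (hint _ _) intervalIntegrable_const]
    refine (intervalIntegral.norm_integral_le_of_norm_le_const (f := fun s => f s - c n) (C := D)
      fun s hs => ?_).trans_eq ?_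
    · rw [Set.uIoc_of_le hle] at hs
      exact hD n hn s ⟨hs.1.le, hs.2⟩
    · rw [abs_of_nonneg (by linarith)]; ring
  have htail : |∫ s in (N * h)..t, f s| ≤ h * B := by
    refine (intervalIntegral.norm_integral_le_of_norm_le_const (f := f) fun s _ => hB s).trans ?_
    rw [abs_of_nonneg (by linarith), mul_comm h]
    exact mul_le_mul_of_nonneg_left (by linarith) ((abs_nonneg _).trans (hB 0))
  have hsum : |∑ n ∈ range N, ((∫ s in (n * h)..((n + 1) * h), f s) - h * c n)| ≤ N * (h * D) := by
    simpa using abs_sum_le_card_mul (range N) fun n hn => hblock n (mem_range.1 hn)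
  rw [hsplit, mul_sum, add_sub_right_comm, ← sum_sub_distrib, mul_assoc]
  exact (abs_add_le _ _).trans (add_le_add hsum htail)

lemma abs_integral_comp_lineInterp_sub_sum_le {g : ℝ → ℝ} {L B δ h t : ℝ} {x : ℕ → ℝ}
    {X : ℝ → ℝ} (hL : 0 ≤ L) (hg : ∀ p q, |g p - g q| ≤ L * |p - q|) (hgB : ∀ p, |g p| ≤ B)
    (hx : ∀ n, |x (n + 1) - x n| ≤ δ) (hX : Continuous X)
    (hXx : ∀ s ∈ Set.Icc 0 t, X s = lineInterp x (s / h)) (hh : 0 < h) (ht : 0 ≤ t) :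
    |(∫ s in (0:ℝ)..t, g (X s)) - h * ∑ n ∈ range ⌊t / h⌋₊, g (x n)|
      ≤ ⌊t / h⌋₊ * h * (L * δ) + h * B := by
  have hgc : Continuous g := (LipschitzWith.of_dist_le_mul (K := L.toNNReal) fun p q => by
    simpa [Real.dist_eq, Real.coe_toNNReal L hL] using hg p q).continuous
  set N := ⌊t / h⌋₊
  have hNt : N * h ≤ t := (le_div_iff₀ hh).1 (Nat.floor_le (div_nonneg ht hh.le))
  have htN : t ≤ (N + 1) * h := (div_le_iff₀ hh).1 (Nat.lt_floor_add_one _).le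
  refine abs_integral_sub_riemannSum_le (hgc.comp hX) hh hNt htN (fun n hn s hs => ?_)
    fun s => hgB _
  have hnN : ((n : ℝ) + 1) * h ≤ N * h := by gcongr; exact_mod_cast hn
  have hs0 : 0 ≤ s := le_trans (by positivity) hs.1
  have hsh : s / h ∈ Set.Icc (n : ℝ) (n + 1) :=
    ⟨(le_div_iff₀ hh).2 hs.1, (div_le_iff₀ hh).2 hs.2⟩
  rw [Function.comp_apply, hXx s ⟨hs0, by linarith [hs.2]⟩]
  exact (hg _ _).trans (mul_le_mul_of_nonneg_left ((abs_lineInterp_sub_le x hsh).trans (hx n)) hL)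

lemma eLpNorm_iSup_abs_le {Ω ι : Type*} [MeasurableSpace Ω] {μ : Measure Ω}
    [IsProbabilityMeasure μ] [Nonempty ι] {E : Ω → ι → ℝ} {G : Ω → ℝ} {c k : ℝ} {p : ℝ≥0∞}
    (hp : 1 ≤ p) (hG : AEStronglyMeasurable G μ) (hc : 0 ≤ c) (hk : 0 ≤ k)
    (hE : ∀ z i, |E z i| ≤ c + k * G z) :
    eLpNorm (fun z => ⨆ i, |E z i|) p μ ≤ ENNReal.ofReal c + ENNReal.ofReal k * eLpNorm G p μ := by
  have hconst : eLpNorm (fun _ : Ω => c) p μ ≤ ENNReal.ofReal c := by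
    simpa using eLpNorm_le_of_ae_bound (μ := μ) (p := p) (f := fun _ : Ω => c) (C := c)
      (Eventually.of_forall fun _ => (abs_of_nonneg hc).le)
  calc eLpNorm (fun z => ⨆ i, |E z i|) p μ ≤ eLpNorm ((fun _ => c) + k • G) p μ := by
        refine eLpNorm_mono_real fun z => ?_
        rw [Real.norm_eq_abs, abs_of_nonneg (Real.iSup_nonneg fun i => abs_nonneg _)]
        exact ciSup_le (hE z)
    _ ≤ eLpNorm (fun _ => c) p μ + eLpNorm (k • G) p μ :=
        eLpNorm_add_le aestronglyMeasurable_const (hG.const_smul k) hp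
    _ ≤ ENNReal.ofReal c + ENNReal.ofReal k * eLpNorm G p μ := by
        rw [eLpNorm_const_smul, Real.enorm_of_nonneg hk]
        exact add_le_add_left hconst _

lemma birkhoff_succ {Λ : Type*} (T : Λ → Λ) (v : Λ → ℝ) (n : ℕ) (y : Λ) :
    birkhoff T v (n + 1) y = birkhoff T v n y + v (T^[n] y) :=
  sum_range_succ _ _

lemma birkhoff_one {Λ : Type*} (T : Λ → Λ) (v : Λ → ℝ) : birkhoff T v 1 = v := by
  ext y; simp [birkhoff]

section BlockOscillation

variable {Λ : Type*} (T : Λ → Λ) (v : Λ → ℝ)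

def blockOscillation (K M : ℕ) (z : Λ) : ℝ :=
  ∑ n ∈ range K, ∑ r ∈ range M, |birkhoff T v r (T^[n * M] z)|

lemma blockOscillation_mono {K K' : ℕ} (hK : K ≤ K') (M : ℕ) (z : Λ) :
    blockOscillation T v K M z ≤ blockOscillation T v K' M z :=
  sum_le_sum_of_subset_of_nonneg (range_subset_range.2 hK) fun _ _ _ =>
    sum_nonneg fun _ _ => abs_nonneg _

variable [MeasurableSpace Λ] {μ : Measure Λ} {T v}

lemma measurable_birkhoff (hT : Measurable T) (hv : Measurable v) (n : ℕ) :
    Measurable (birkhoff T v n) :=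
  Finset.measurable_sum _ fun j _ => hv.comp (hT.iterate j)

lemma measurable_blockOscillation (hT : Measurable T) (hv : Measurable v) (K M : ℕ) :
    Measurable (blockOscillation T v K M) :=
  Finset.measurable_sum _ fun _ _ => Finset.measurable_sum _ fun r _ =>
    ((measurable_birkhoff hT hv r).comp (hT.iterate _)).abs

lemma eLpNorm_blockOscillation_le (hT : MeasurePreserving T μ μ) (hv : Measurable v)
    {p : ℝ≥0∞} (hp : 1 ≤ p) {C : ℝ} (hC : 0 ≤ C)
    (hmom : ∀ n : ℕ, 1 ≤ n →
      eLpNorm (birkhoff T v n) p μ ≤ ENNReal.ofReal (C * (n : ℝ) ^ ((1 : ℝ) / 2)))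
    (K M : ℕ) :
    eLpNorm (blockOscillation T v K M) p μ
      ≤ ENNReal.ofReal (K * M * (C * (M : ℝ) ^ ((1 : ℝ) / 2))) := by
  set g : ℕ → ℕ → Λ → ℝ := fun n r z => |birkhoff T v r (T^[n * M] z)|
  have hg : ∀ n r, AEStronglyMeasurable (g n r) μ := fun n r =>
    ((measurable_birkhoff hT.measurable hv r).comp (hT.measurable.iterate _)).abs
      |>.aestronglyMeasurable
  have hterm : ∀ n, ∀ r < M,
      eLpNorm (g n r) p μ ≤ ENNReal.ofReal (C * (M : ℝ) ^ ((1 : ℝ) / 2)) := by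
    intro n r hr
    have hmeas := (measurable_birkhoff hT.measurable hv r).aestronglyMeasurable (μ := μ)
    rw [show g n r = fun z => ‖(birkhoff T v r ∘ T^[n * M]) z‖ from rfl, eLpNorm_norm,
      eLpNorm_comp_measurePreserving hmeas (hT.iterate _)]
    rcases r.eq_zero_or_pos with rfl | hr0
    · have hzero : birkhoff T v 0 = 0 := by ext; simp [birkhoff]
      simp [hzero]
    · exact (hmom r hr0).trans (ENNReal.ofReal_le_ofReal (by gcongr))
  calc eLpNorm (blockOscillation T v K M) p μ
      = eLpNorm (∑ n ∈ range K, ∑ r ∈ range M, g n r) p μ := by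
        congr 1; ext z; simp [blockOscillation, g, Finset.sum_apply]
    _ ≤ ∑ n ∈ range K, ∑ r ∈ range M, eLpNorm (g n r) p μ :=
        (eLpNorm_sum_le (fun n _ => Finset.aestronglyMeasurable_sum _ fun r _ => hg n r) hp).trans
          (sum_le_sum fun n _ => eLpNorm_sum_le (fun r _ => hg n r) hp)
    _ ≤ ∑ n ∈ range K, ∑ r ∈ range M, ENNReal.ofReal (C * (M : ℝ) ^ ((1 : ℝ) / 2)) :=
        sum_le_sum fun n _ => sum_le_sum fun r hr => hterm n r (mem_range.1 hr)
    _ = ENNReal.ofReal (K * M * (C * (M : ℝ) ^ ((1 : ℝ) / 2))) := by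
        simp only [sum_const, card_range, nsmul_eq_mul]
        rw [← Nat.cast_mul, ENNReal.ofReal_mul (Nat.cast_nonneg _), ENNReal.ofReal_natCast,
          Nat.cast_mul, mul_assoc]

lemma eLpNorm_pow_three_mul_blockOscillation_le (hT : MeasurePreserving T μ μ) (hv : Measurable v)
    {p : ℝ≥0∞} (hp : 1 ≤ p) {C : ℝ} (hC : 0 ≤ C)
    (hmom : ∀ n : ℕ, 1 ≤ n →
      eLpNorm (birkhoff T v n) p μ ≤ ENNReal.ofReal (C * (n : ℝ) ^ ((1 : ℝ) / 2)))
    {ε : ℝ} (hε : ε ∈ Set.Ioo 0 1) :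
    eLpNorm (fun z => ε ^ 3 * blockOscillation T v ⌊ε ^ (-((2:ℝ)/3))⌋₊ ⌊ε ^ (-((4:ℝ)/3))⌋₊ z)
      p μ ≤ ENNReal.ofReal (C * ε ^ ((1:ℝ)/3)) := by
  have hε3 : 0 ≤ ε ^ 3 := pow_nonneg hε.1.le 3
  rw [show (fun z => ε ^ 3 * blockOscillation T v _ _ z) = ε ^ 3 • blockOscillation T v _ _
    from rfl, eLpNorm_const_smul, Real.enorm_of_nonneg hε3]
  refine (mul_le_mul_right (eLpNorm_blockOscillation_le hT hv hp hC hmom _ _) _).trans ?_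
  rw [← ENNReal.ofReal_mul hε3]
  refine ENNReal.ofReal_le_ofReal ?_
  linear_combination C * pow_three_mul_blockCount_le hε

end BlockOscillation

section SlowVariables

variable {Λ : Type*} (a : ℝ → ℝ → Λ → ℝ) (v : Λ → ℝ) (T : Λ → Λ) (ξ ε : ℝ) (z : Λ)

lemma slow_one_add_sub (m r : ℕ) :
    slow a (fun _ => 1) v T ξ ε z (m + r) - slow a (fun _ => 1) v T ξ ε z m
      = ε ^ 2 * ∑ i ∈ Ico m (m + r), a ε (slow a (fun _ => 1) v T ξ ε z i) (T^[i] z)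
        + ε * birkhoff T v r (T^[m] z) := by
  induction r with
  | zero => simp [birkhoff]
  | succ r ih =>
    rw [← add_assoc, slow, sum_Ico_succ_top (Nat.le_add_right m r), birkhoff_succ,
      ← Function.iterate_add_apply, add_comm r m]
    linear_combination ih

lemma lineInterp_slow_one_sub (s : ℝ) :
    lineInterp (slow a (fun _ => 1) v T ξ ε z) s - ξ
        - ε * (birkhoff T v ⌊s⌋₊ z + (s - ⌊s⌋₊) * v (T^[⌊s⌋₊] z))
      = ε ^ 2 * ∑ j ∈ range ⌊s⌋₊, a ε (slow a (fun _ => 1) v T ξ ε z j) (T^[j] z)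
        + (s - ⌊s⌋₊) * (ε ^ 2 * a ε (slow a (fun _ => 1) v T ξ ε z ⌊s⌋₊) (T^[⌊s⌋₊] z)) := by
  have hpath := slow_one_add_sub a v T ξ ε z 0 ⌊s⌋₊
  simp only [zero_add, Function.iterate_zero, id, Nat.Ico_zero_eq_range] at hpath
  rw [lineInterp, slow]
  simp only [slow] at hpath
  linear_combination hpath

variable {a v T ξ ε z} {Ca : ℝ}

lemma abs_slow_one_add_sub_le (hε : 0 ≤ ε) (ha : ∀ x y, |a ε x y| ≤ Ca) (m r : ℕ) :
    |slow a (fun _ => 1) v T ξ ε z (m + r) - slow a (fun _ => 1) v T ξ ε z m|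
      ≤ ε ^ 2 * (r * Ca) + ε * |birkhoff T v r (T^[m] z)| := by
  have hsum : |∑ i ∈ Ico m (m + r), a ε (slow a (fun _ => 1) v T ξ ε z i) (T^[i] z)| ≤ r * Ca := by
    simpa using abs_sum_le_card_mul (Ico m (m + r)) fun i _ => ha _ _
  rw [slow_one_add_sub]
  refine (abs_add_le _ _).trans (add_le_add ?_ (by rw [abs_mul, abs_of_nonneg hε]))
  rw [abs_mul, abs_of_nonneg (by positivity)]
  exact mul_le_mul_of_nonneg_left hsum (by positivity)

end SlowVariables

section Averaging

variable {Λ : Type*} [MeasurableSpace Λ] (μ : Measure Λ) [IsProbabilityMeasure μ]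
  {a : ℝ → ℝ → Λ → ℝ} {Ca L : ℝ}

lemma abs_abar_le (ha : ∀ x y, |a 0 x y| ≤ Ca) (x : ℝ) : |abar μ a x| ≤ Ca := by
  simpa [abar] using norm_integral_le_of_norm_le_const (μ := μ)
    (Eventually.of_forall (ha x) : ∀ᵐ y ∂μ, ‖a 0 x y‖ ≤ Ca)

lemma abs_abar_sub_le (hmeas : ∀ x, Measurable (a 0 x)) (ha : ∀ x y, |a 0 x y| ≤ Ca)
    (hlip : ∀ x x' y, |a 0 x y - a 0 x' y| ≤ L * |x - x'|) (x x' : ℝ) :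
    |abar μ a x - abar μ a x'| ≤ L * |x - x'| := by
  have hint : ∀ x, Integrable (a 0 x) μ := fun x =>
    (integrable_const Ca).mono' (hmeas x).aestronglyMeasurable (Eventually.of_forall (ha x))
  rw [abar, abar, ← integral_sub (hint x) (hint x')]
  simpa using norm_integral_le_of_norm_le_const (μ := μ)
    (Eventually.of_forall (hlip x x') : ∀ᵐ y ∂μ, ‖a 0 x y - a 0 x' y‖ ≤ L * |x - x'|)

lemma abs_atil_le (ha : ∀ x y, |a 0 x y| ≤ Ca) (x : ℝ) (y : Λ) : |atil μ a x y| ≤ 2 * Ca := by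
  rw [atil]
  linarith [abs_sub (a 0 x y) (abar μ a x), ha x y, abs_abar_le μ ha x]

lemma abs_atil_sub_le (hmeas : ∀ x, Measurable (a 0 x)) (ha : ∀ x y, |a 0 x y| ≤ Ca)
    (hlip : ∀ x x' y, |a 0 x y - a 0 x' y| ≤ L * |x - x'|) (x x' : ℝ) (y : Λ) :
    |atil μ a x y - atil μ a x' y| ≤ 2 * L * |x - x'| := by
  rw [show atil μ a x y - atil μ a x' y = a 0 x y - a 0 x' y - (abar μ a x - abar μ a x') by
    simp only [atil]; ring]
  linarith [abs_sub (a 0 x y - a 0 x' y) (abar μ a x - abar μ a x'), hlip x x' y,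
    abs_abar_sub_le μ hmeas ha hlip x x']

end Averaging

lemma Deps_eq {Λ : Type*} [MeasurableSpace Λ] (μ : Measure Λ) (a : ℝ → ℝ → Λ → ℝ)
    (b : ℝ → ℝ) (v : Λ → ℝ) (T : Λ → Λ) (ξ : ℝ) {ε : ℝ} (hε : 0 ≤ ε) (y : Λ) (t : ℝ) :
    Deps μ a b v T ξ ε y t = ε ^ 2 * ∑ n ∈ range ⌊t * ε ^ (-((2:ℝ)/3))⌋₊,
      ∑ j ∈ Ico (n * ⌊ε ^ (-((4:ℝ)/3))⌋₊) ((n + 1) * ⌊ε ^ (-((4:ℝ)/3))⌋₊),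
        atil μ a (slow a b v T ξ ε y (n * ⌊ε ^ (-((4:ℝ)/3))⌋₊)) (T^[j] y) := by
  simp only [Deps, Jeps, ← mul_sum]
  rw [← mul_assoc, ← Real.rpow_add' hε (by norm_num)]
  norm_num

section Remainder

variable {Λ : Type*} [MeasurableSpace Λ] (μ : Measure Λ) [IsProbabilityMeasure μ]
  {a : ℝ → ℝ → Λ → ℝ} {v : Λ → ℝ} {T : Λ → Λ} {ξ ε Ca Creg L Kv : ℝ}

lemma abs_sum_atil_sub_frozen_blocks_le (hmeas : ∀ x, Measurable (a 0 x))
    (ha : ∀ x y, |a ε x y| ≤ Ca) (ha0 : ∀ x y, |a 0 x y| ≤ Ca)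
    (hlip : ∀ x x' y, |a 0 x y - a 0 x' y| ≤ L * |x - x'|) (hL : 0 ≤ L) (hε : 0 ≤ ε)
    {K M N : ℕ} (hKMN : K * M ≤ N) (z : Λ) :
    |∑ j ∈ range N, atil μ a (slow a (fun _ => 1) v T ξ ε z j) (T^[j] z)
        - ∑ n ∈ range K, ∑ j ∈ Ico (n * M) ((n + 1) * M),
            atil μ a (slow a (fun _ => 1) v T ξ ε z (n * M)) (T^[j] z)|
      ≤ 2 * L * (K * M * (ε ^ 2 * (M * Ca)) + ε * blockOscillation T v K M z)
        + (N - K * M) * (2 * Ca) := by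
  have hCa : 0 ≤ Ca := (abs_nonneg _).trans (ha0 0 z)
  have hdrift : ∀ n, ∀ r ∈ range M,
      |atil μ a (slow a (fun _ => 1) v T ξ ε z (n * M + r)) (T^[n * M + r] z)
          - atil μ a (slow a (fun _ => 1) v T ξ ε z (n * M)) (T^[n * M + r] z)|
        ≤ 2 * L * (ε ^ 2 * (M * Ca) + ε * |birkhoff T v r (T^[n * M] z)|) := by
    intro n r hr
    have hrM : (r : ℝ) ≤ M := by exact_mod_cast (mem_range.1 hr).le
    refine (abs_atil_sub_le μ hmeas ha0 hlip _ _ _).trans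
      (mul_le_mul_of_nonneg_left ((abs_slow_one_add_sub_le hε ha _ _).trans ?_) (by positivity))
    gcongr
  refine (abs_sum_diag_sub_sum_blocks_le (fun i j => atil μ a (slow a (fun _ => 1) v T ξ ε z i)
    (T^[j] z)) hKMN fun j => abs_atil_le μ ha0 _ _).trans (add_le_add_left ?_ _)
  refine (sum_le_sum fun n _ => sum_le_sum (hdrift n)).trans_eq ?_
  simp only [blockOscillation, mul_add, sum_add_distrib, ← mul_sum, sum_const, card_range,
    nsmul_eq_mul]
  ring

lemma abs_sq_mul_sum_atil_sub_Deps_le (hmeas : ∀ x, Measurable (a 0 x))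
    (ha : ∀ x y, |a ε x y| ≤ Ca) (ha0 : ∀ x y, |a 0 x y| ≤ Ca)
    (hlip : ∀ x x' y, |a 0 x y - a 0 x' y| ≤ L * |x - x'|) (hL : 0 ≤ L)
    (hε : ε ∈ Set.Ioo 0 1) {t : ℝ} (ht : t ∈ Set.Icc 0 1) (z : Λ) :
    |ε ^ 2 * ∑ j ∈ range ⌊t / ε ^ 2⌋₊, atil μ a (slow a (fun _ => 1) v T ξ ε z j) (T^[j] z)
        - Deps μ a (fun _ => 1) v T ξ ε z t|
      ≤ (2 * L + 4) * Ca * ε ^ ((1:ℝ)/3)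
        + 2 * L * ε ^ 3 * blockOscillation T v ⌊ε ^ (-((2:ℝ)/3))⌋₊ ⌊ε ^ (-((4:ℝ)/3))⌋₊ z := by
  obtain ⟨hε0, hε1⟩ := hε
  set u := ε ^ ((1:ℝ)/3)
  have hu0 : 0 < u := Real.rpow_pos_of_pos hε0 _
  have hu1 : u ≤ 1 := Real.rpow_le_one hε0.le hε1.le (by norm_num)
  have hCa : 0 ≤ Ca := (abs_nonneg _).trans (ha0 0 z)
  have hε3 : ε = u ^ 3 := by rw [← rpow_natCast_div_three hε0.le 3]; norm_num
  have hα : ε ^ (-((2:ℝ)/3)) = (u ^ 2)⁻¹ := by exact_mod_cast rpow_neg_natCast_div_three hε0.le 2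
  have hβ : ε ^ (-((4:ℝ)/3)) = (u ^ 4)⁻¹ := by exact_mod_cast rpow_neg_natCast_div_three hε0.le 4
  have hα0 : 0 ≤ t * (u ^ 2)⁻¹ := by have := ht.1; positivity
  set K := ⌊t * (u ^ 2)⁻¹⌋₊
  set M := ⌊(u ^ 4)⁻¹⌋₊
  have hN : t / ε ^ 2 = t * (u ^ 2)⁻¹ * (u ^ 4)⁻¹ := by rw [hε3]; field_simp
  have hblocks := abs_sum_atil_sub_frozen_blocks_le μ (v := v) (T := T) (ξ := ξ) hmeas ha ha0
    hlip hL hε0.le (natFloor_mul_natFloor_le hα0 (by positivity : 0 ≤ (u ^ 4)⁻¹)) z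
  have hosc := blockOscillation_mono T v
    (Nat.floor_le_floor (mul_le_of_le_one_left (by positivity : (0:ℝ) ≤ (u ^ 2)⁻¹) ht.2)) M z
  have hdrift : ε ^ 2 * ε ^ 2 * K * M * M ≤ u :=
    (pow_twelve_mul_natFloor_mul_sq_le hu0 hu1 ht).trans_eq' (by rw [hε3]; ring)
  have hrest : ε ^ 2 * ((⌊t * (u ^ 2)⁻¹ * (u ^ 4)⁻¹⌋₊ : ℝ) - K * M) ≤ 2 * u :=
    (pow_six_mul_natFloor_sub_le hu0 hu1 ht).trans_eq' (by rw [hε3]; ring)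
  rw [Deps_eq μ _ _ _ _ _ hε0.le, hα, hβ, hN, ← mul_sub, abs_mul, abs_of_nonneg (sq_nonneg _)]
  calc _ ≤ ε ^ 2 * (2 * L * (K * M * (ε ^ 2 * (M * Ca)) + ε * blockOscillation T v K M z)
          + ((⌊t * (u ^ 2)⁻¹ * (u ^ 4)⁻¹⌋₊ : ℝ) - K * M) * (2 * Ca)) := by gcongr
    _ = 2 * L * Ca * (ε ^ 2 * ε ^ 2 * K * M * M) + 2 * L * ε ^ 3 * blockOscillation T v K M z
          + 2 * Ca * (ε ^ 2 * ((⌊t * (u ^ 2)⁻¹ * (u ^ 4)⁻¹⌋₊ : ℝ) - K * M)) := by ring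
    _ ≤ 2 * L * Ca * u + 2 * L * ε ^ 3 * blockOscillation T v ⌊(u ^ 2)⁻¹⌋₊ M z
          + 2 * Ca * (2 * u) := by gcongr
    _ = _ := by ring

lemma abs_integral_abar_sub_sum_le (hvbd : ∀ y, |v y| ≤ Kv) (hmeas : ∀ x, Measurable (a 0 x))
    (ha : ∀ x y, |a ε x y| ≤ Ca) (ha0 : ∀ x y, |a 0 x y| ≤ Ca)
    (hlip : ∀ x x' y, |a 0 x y - a 0 x' y| ≤ L * |x - x'|) (hL : 0 ≤ L)
    (hε : ε ∈ Set.Ioo 0 1) {X : C01} {z : Λ}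
    (hX : ∀ t : Set.Icc (0:ℝ) 1, X t = lineInterp (slow a (fun _ => 1) v T ξ ε z) (t / ε ^ 2))
    (t : Set.Icc (0:ℝ) 1) :
    |(∫ s in (0:ℝ)..t, abar μ a (ev X s))
        - ε ^ 2 * ∑ n ∈ range ⌊(t : ℝ) / ε ^ 2⌋₊, abar μ a (slow a (fun _ => 1) v T ξ ε z n)|
      ≤ (L * (Ca + Kv) + Ca) * ε ^ ((1:ℝ)/3) := by
  obtain ⟨hε0, hε1⟩ := hε
  have hCa : 0 ≤ Ca := (abs_nonneg _).trans (ha0 0 z)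
  have hKv : 0 ≤ Kv := (abs_nonneg _).trans (hvbd z)
  have hεu := le_rpow_one_div_three hε0 hε1.le
  have hε2u := (pow_le_of_le_one hε0.le hε1.le two_ne_zero).trans hεu
  have hstep : ∀ n, |slow a (fun _ => 1) v T ξ ε z (n + 1) - slow a (fun _ => 1) v T ξ ε z n|
      ≤ ε ^ 2 * Ca + ε * Kv := fun n => by
    refine (abs_slow_one_add_sub_le hε0.le ha n 1).trans ?_
    rw [birkhoff_one, Nat.cast_one, one_mul]
    gcongr
    exact hvbd _
  have hXx : ∀ s ∈ Set.Icc 0 (t : ℝ),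
      ev X s = lineInterp (slow a (fun _ => 1) v T ξ ε z) (s / ε ^ 2) := fun s hs => by
    rw [ev, Set.projIcc_of_mem _ ⟨hs.1, hs.2.trans t.2.2⟩, hX]
  have hNε : (⌊(t : ℝ) / ε ^ 2⌋₊ : ℝ) * ε ^ 2 ≤ 1 :=
    ((le_div_iff₀ (by positivity)).1 (Nat.floor_le (by have := t.2.1; positivity))).trans t.2.2
  refine (abs_integral_comp_lineInterp_sub_sum_le hL (abs_abar_sub_le μ hmeas ha0 hlip)
    (abs_abar_le μ ha0) hstep ((X.continuous.comp continuous_projIcc)) hXx (by positivity)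
    t.2.1).trans ?_
  calc _ ≤ 1 * (L * (ε ^ ((1:ℝ)/3) * Ca + ε ^ ((1:ℝ)/3) * Kv)) + ε ^ ((1:ℝ)/3) * Ca := by
        gcongr
    _ = (L * (Ca + Kv) + Ca) * ε ^ ((1:ℝ)/3) := by ring

lemma abs_remainder_le (hvbd : ∀ y, |v y| ≤ Kv) (hmeas : ∀ x, Measurable (a 0 x))
    (ha : ∀ x y, |a ε x y| ≤ Ca) (ha0 : ∀ x y, |a 0 x y| ≤ Ca)
    (hreg : ∀ x y, |a ε x y - a 0 x y| ≤ Creg * ε ^ ((1:ℝ)/3))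
    (hlip : ∀ x x' y, |a 0 x y - a 0 x' y| ≤ L * |x - x'|) (hL : 0 ≤ L)
    (hε : ε ∈ Set.Ioo 0 1) {X W : C01} {z : Λ}
    (hX : ∀ t : Set.Icc (0:ℝ) 1, X t = lineInterp (slow a (fun _ => 1) v T ξ ε z) (t / ε ^ 2))
    (hW : ∀ t : Set.Icc (0:ℝ) 1, W t = ε * (birkhoff T v ⌊(t : ℝ) / ε ^ 2⌋₊ z
      + ((t : ℝ) / ε ^ 2 - ⌊(t : ℝ) / ε ^ 2⌋₊) * v (T^[⌊(t : ℝ) / ε ^ 2⌋₊] z)))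
    (t : Set.Icc (0:ℝ) 1) :
    |X t - ξ - (∫ s in (0:ℝ)..t, abar μ a (ev X s)) - W t
        - Deps μ a (fun _ => 1) v T ξ ε z t|
      ≤ (Creg + L * Kv + (3 * L + 6) * Ca) * ε ^ ((1:ℝ)/3)
        + 2 * L * (ε ^ 3 * blockOscillation T v ⌊ε ^ (-((2:ℝ)/3))⌋₊ ⌊ε ^ (-((4:ℝ)/3))⌋₊ z) := by
  obtain ⟨hε0, hε1⟩ := hε
  set x := slow a (fun _ => 1) v T ξ ε z
  set s := (t : ℝ) / ε ^ 2
  set N := ⌊s⌋₊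
  set u := ε ^ ((1:ℝ)/3)
  have hCa : 0 ≤ Ca := (abs_nonneg _).trans (ha0 0 z)
  have hε2u : ε ^ 2 ≤ u :=
    (pow_le_of_le_one hε0.le hε1.le two_ne_zero).trans (le_rpow_one_div_three hε0 hε1.le)
  have hNε : (N : ℝ) * ε ^ 2 ≤ 1 :=
    ((le_div_iff₀ (by positivity)).1 (Nat.floor_le (by have := t.2.1; positivity))).trans t.2.2
  have hθ0 : 0 ≤ s - N := sub_nonneg.2 (Nat.floor_le (by have := t.2.1; positivity))
  have hθ1 : s - N ≤ 1 := by linarith [Nat.lt_floor_add_one s]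
  have hsplit : ∑ j ∈ range N, a ε (x j) (T^[j] z) = ∑ j ∈ range N, (a ε (x j) (T^[j] z)
      - a 0 (x j) (T^[j] z)) + ∑ j ∈ range N, abar μ a (x j)
      + ∑ j ∈ range N, atil μ a (x j) (T^[j] z) := by
    simp only [atil, ← sum_add_distrib]
    exact sum_congr rfl fun j _ => by ring
  have hE1 : |ε ^ 2 * ∑ j ∈ range N, (a ε (x j) (T^[j] z) - a 0 (x j) (T^[j] z))| ≤ Creg * u :=
    abs_mul_sum_range_le (by positivity) hNε fun j => hreg _ _
  have hE2 : |(s - N) * (ε ^ 2 * a ε (x N) (T^[N] z))| ≤ Ca * u := by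
    rw [abs_mul, abs_mul, abs_of_nonneg hθ0, abs_of_nonneg (by positivity)]
    calc _ ≤ 1 * (u * Ca) := by gcongr; exact ha _ _
      _ = Ca * u := by ring
  have hE3 := abs_integral_abar_sub_sum_le μ hvbd hmeas ha ha0 hlip hL ⟨hε0, hε1⟩ hX t
  have hE4 := abs_sq_mul_sum_atil_sub_Deps_le μ (v := v) (T := T) (ξ := ξ) hmeas ha ha0 hlip hL
    ⟨hε0, hε1⟩ t.2 z
  have hdecomp : X t - ξ - (∫ s in (0:ℝ)..t, abar μ a (ev X s)) - W t
      - Deps μ a (fun _ => 1) v T ξ ε z t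
      = ε ^ 2 * ∑ j ∈ range N, (a ε (x j) (T^[j] z) - a 0 (x j) (T^[j] z))
        + (s - N) * (ε ^ 2 * a ε (x N) (T^[N] z))
        - ((∫ s in (0:ℝ)..t, abar μ a (ev X s)) - ε ^ 2 * ∑ j ∈ range N, abar μ a (x j))
        + (ε ^ 2 * ∑ j ∈ range N, atil μ a (x j) (T^[j] z)
          - Deps μ a (fun _ => 1) v T ξ ε z t) := by
    rw [hX, hW]
    linear_combination lineInterp_slow_one_sub a v T ξ ε z s + ε ^ 2 * hsplit
  rw [hdecomp, abs_le]
  constructor <;> linarith [abs_le.1 hE1, abs_le.1 hE2, abs_le.1 hE3, abs_le.1 hE4]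

end Remainder

theorem decomposition_remainder_estimate_general
    {Λ : Type} [MeasurableSpace Λ] (μ : Measure Λ) [IsProbabilityMeasure μ]
    (T : Λ → Λ) (hT : MeasurePreserving T μ μ)
    -- `v ∈ L^∞(Λ)`
    (v : Λ → ℝ) (hvmeas : Measurable v) (Kv : ℝ) (hvbd : ∀ y, |v y| ≤ Kv)
    -- the family `a_ε` and the regularity conditions (i)-(iii)
    (a : ℝ → ℝ → Λ → ℝ) (hameas : ∀ ε x, Measurable (a ε x))
    (Ca : ℝ) (hreg1 : ∀ ε ∈ Set.Icc (0:ℝ) 1, ∀ (x : ℝ) (y : Λ), |a ε x y| ≤ Ca)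
    (Creg : ℝ) (hreg2 : ∀ ε ∈ Set.Ioo (0:ℝ) 1, ∀ (x : ℝ) (y : Λ),
      |a ε x y - a 0 x y| ≤ Creg * ε ^ ((1:ℝ)/3))
    (L : ℝ) (hL : 0 ≤ L)
    (hreg3 : ∀ (x x' : ℝ) (y : Λ), |a 0 x y - a 0 x' y| ≤ L * |x - x'|)
    (ξ : ℝ)
    -- `x̂_ε(t) = x_ε(t ε⁻²)`, linearly interpolated, as a random element of `C[0,1]`
    (Xhat : ℝ → Λ → C01)
    (hXhat : ∀ ε ∈ Set.Ioo (0:ℝ) 1, ∀ (y : Λ) (t : Set.Icc (0:ℝ) 1),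
      Xhat ε y t = slow a (fun _ => (1:ℝ)) v T ξ ε y ⌊(t:ℝ)/ε^2⌋₊
        + ((t:ℝ)/ε^2 - (⌊(t:ℝ)/ε^2⌋₊ : ℝ)) *
          (slow a (fun _ => (1:ℝ)) v T ξ ε y (⌊(t:ℝ)/ε^2⌋₊ + 1) - slow a (fun _ => (1:ℝ)) v T ξ ε y ⌊(t:ℝ)/ε^2⌋₊))
    -- `W_ε(t) = ε v_{t ε⁻²}`, linearly interpolated
    (Weps : ℝ → Λ → C01)
    (hWeps : ∀ ε ∈ Set.Ioo (0:ℝ) 1, ∀ (y : Λ) (t : Set.Icc (0:ℝ) 1),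
      Weps ε y t = ε * (birkhoff T v ⌊(t:ℝ)/ε^2⌋₊ y
        + ((t:ℝ)/ε^2 - (⌊(t:ℝ)/ε^2⌋₊ : ℝ)) * v (T^[⌊(t:ℝ)/ε^2⌋₊] y)))
    (q : ℝ) (hq : 1 ≤ q) (Cm : ℝ)
    -- moment condition (5.2)
    (h52 : ∀ n : ℕ, 1 ≤ n →
      eLpNorm (birkhoff T v n) (ENNReal.ofReal q) μ
        ≤ ENNReal.ofReal (Cm * (n:ℝ) ^ ((1:ℝ)/2)))
    :
    ∃ C : ℝ, 0 < C ∧ ∀ ε ∈ Set.Ioo (0:ℝ) 1,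
      eLpNorm (fun y => ⨆ t : Set.Icc (0:ℝ) 1,
          |Xhat ε y t - ξ - (∫ s in (0:ℝ)..(t:ℝ), abar μ a (ev (Xhat ε y) s))
            - Weps ε y t - Deps μ a (fun _ => (1:ℝ)) v T ξ ε y (t:ℝ)|)
        (ENNReal.ofReal q) μ ≤ ENNReal.ofReal (C * ε ^ ((1:ℝ)/3)) := by
  obtain ⟨y₀⟩ := nonempty_of_isProbabilityMeasure μ
  have hCa : 0 ≤ Ca := (abs_nonneg _).trans (hreg1 0 ⟨le_rfl, zero_le_one⟩ 0 y₀)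
  have hKv : 0 ≤ Kv := (abs_nonneg _).trans (hvbd y₀)
  have hCreg : 0 ≤ Creg := by
    have := (abs_nonneg _).trans (hreg2 (1/2) ⟨by norm_num, by norm_num⟩ 0 y₀)
    exact nonneg_of_mul_nonneg_left this (by positivity)
  have hp : 1 ≤ ENNReal.ofReal q := ENNReal.one_le_ofReal.2 hq
  have hmom : ∀ n : ℕ, 1 ≤ n → eLpNorm (birkhoff T v n) (ENNReal.ofReal q) μ
      ≤ ENNReal.ofReal (max Cm 0 * (n:ℝ) ^ ((1:ℝ)/2)) := fun n hn =>
    (h52 n hn).trans (ENNReal.ofReal_le_ofReal (by gcongr; exact le_max_left _ _))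
  set c := Creg + L * Kv + (3 * L + 6) * Ca
  refine ⟨c + 2 * L * max Cm 0 + 1, by positivity, fun ε hε => ?_⟩
  have hu : 0 ≤ ε ^ ((1:ℝ)/3) := Real.rpow_nonneg hε.1.le _
  calc _ ≤ ENNReal.ofReal (c * ε ^ ((1:ℝ)/3)) + ENNReal.ofReal (2 * L) * eLpNorm
        (fun z => ε ^ 3 * blockOscillation T v ⌊ε ^ (-((2:ℝ)/3))⌋₊ ⌊ε ^ (-((4:ℝ)/3))⌋₊ z)
          (ENNReal.ofReal q) μ :=
        -- `hXhat ε hε z` is the hypothesis `hX` of `abs_remainder_le` with `lineInterp` unfolded.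
        eLpNorm_iSup_abs_le hp
          ((measurable_blockOscillation hT.measurable hvmeas _ _).const_mul _).aestronglyMeasurable
          (by positivity) (by positivity) fun z t =>
          abs_remainder_le μ hvbd (hameas 0) (hreg1 ε ⟨hε.1.le, hε.2.le⟩)
            (hreg1 0 ⟨le_rfl, zero_le_one⟩) (hreg2 ε hε) hreg3 hL hε (hXhat ε hε z) (hWeps ε hε z) t
    _ ≤ ENNReal.ofReal (c * ε ^ ((1:ℝ)/3))
        + ENNReal.ofReal (2 * L) * ENNReal.ofReal (max Cm 0 * ε ^ ((1:ℝ)/3)) := by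
        gcongr
        exact eLpNorm_pow_three_mul_blockOscillation_le hT hvmeas hp (le_max_right _ _) hmom hε
    _ ≤ ENNReal.ofReal ((c + 2 * L * max Cm 0 + 1) * ε ^ ((1:ℝ)/3)) := by
        rw [← ENNReal.ofReal_mul (by positivity),
          ← ENNReal.ofReal_add (by positivity) (by positivity)]
        exact ENNReal.ofReal_le_ofReal (by linear_combination hu)

/-- **Proposition 5.5 (decomposition of `x̂_ε`, case `b ≡ 1`).**
`x̂_ε(t) = ξ + ∫₀ᵗ ā(x̂_ε(s)) ds + W_ε(t) + D_ε(t) + E_ε(t)` where the remainder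
`E_ε` (defined by this identity) satisfies `‖sup_{[0,1]} |E_ε|‖_{L^q(μ)} ≤ C ε^{1/3}`. -/
theorem decomposition_remainder_estimate
    {Λ : Type} [MeasurableSpace Λ] (μ : Measure Λ) [IsProbabilityMeasure μ]
    (T : Λ → Λ) (hT : MeasurePreserving T μ μ) (hTerg : Ergodic T μ)
    -- `v ∈ L^∞(Λ)`
    (v : Λ → ℝ) (hvmeas : Measurable v) (Kv : ℝ) (hvbd : ∀ y, |v y| ≤ Kv)
    -- the family `a_ε` and the regularity conditions (i)-(iii)
    (a : ℝ → ℝ → Λ → ℝ) (hameas : ∀ ε x, Measurable (a ε x))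
    (Ca : ℝ) (hreg1 : ∀ ε ∈ Set.Icc (0:ℝ) 1, ∀ (x : ℝ) (y : Λ), |a ε x y| ≤ Ca)
    (Creg : ℝ) (hreg2 : ∀ ε ∈ Set.Ioo (0:ℝ) 1, ∀ (x : ℝ) (y : Λ),
      |a ε x y - a 0 x y| ≤ Creg * ε ^ ((1:ℝ)/3))
    (L : ℝ) (hL : 0 ≤ L)
    (hreg3 : ∀ (x x' : ℝ) (y : Λ), |a 0 x y - a 0 x' y| ≤ L * |x - x'|)
    (ξ : ℝ)
    -- `x̂_ε(t) = x_ε(t ε⁻²)`, linearly interpolated, as a random element of `C[0,1]`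
    (Xhat : ℝ → Λ → C01)
    (hXhat : ∀ ε ∈ Set.Ioo (0:ℝ) 1, ∀ (y : Λ) (t : Set.Icc (0:ℝ) 1),
      Xhat ε y t = slow a (fun _ => (1:ℝ)) v T ξ ε y ⌊(t:ℝ)/ε^2⌋₊
        + ((t:ℝ)/ε^2 - (⌊(t:ℝ)/ε^2⌋₊ : ℝ)) *
          (slow a (fun _ => (1:ℝ)) v T ξ ε y (⌊(t:ℝ)/ε^2⌋₊ + 1) - slow a (fun _ => (1:ℝ)) v T ξ ε y ⌊(t:ℝ)/ε^2⌋₊))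
    -- `W_ε(t) = ε v_{t ε⁻²}`, linearly interpolated
    (Weps : ℝ → Λ → C01)
    (hWeps : ∀ ε ∈ Set.Ioo (0:ℝ) 1, ∀ (y : Λ) (t : Set.Icc (0:ℝ) 1),
      Weps ε y t = ε * (birkhoff T v ⌊(t:ℝ)/ε^2⌋₊ y
        + ((t:ℝ)/ε^2 - (⌊(t:ℝ)/ε^2⌋₊ : ℝ)) * v (T^[⌊(t:ℝ)/ε^2⌋₊] y)))
    (q : ℝ) (hq : 1 ≤ q) (Cm : ℝ)
    -- moment condition (5.2)
    (h52 : ∀ n : ℕ, 1 ≤ n →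
      eLpNorm (birkhoff T v n) (ENNReal.ofReal q) μ
        ≤ ENNReal.ofReal (Cm * (n:ℝ) ^ ((1:ℝ)/2)))
    :
    ∃ C : ℝ, 0 < C ∧ ∀ ε ∈ Set.Ioo (0:ℝ) 1,
      eLpNorm (fun y => ⨆ t : Set.Icc (0:ℝ) 1,
          |Xhat ε y t - ξ - (∫ s in (0:ℝ)..(t:ℝ), abar μ a (ev (Xhat ε y) s))
            - Weps ε y t - Deps μ a (fun _ => (1:ℝ)) v T ξ ε y (t:ℝ)|)
        (ENNReal.ofReal q) μ ≤ ENNReal.ofReal (C * ε ^ ((1:ℝ)/3)) :=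
  decomposition_remainder_estimate_general μ T hT v hvmeas Kv hvbd a hameas Ca hreg1 Creg hreg2 L hL
    hreg3 ξ Xhat hXhat Weps hWeps q hq Cm h52
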